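/- Let I, J ∈ ℝ with I > J + d/2 and m ∈ ℕ. Then every bounded symmetric m-linear functional A on H_J(T^d) restricts to a Hilbert–Schmidt m-linear functional on H_I(T^d) with ‖A‖_{HS, H_I} ≤ C_{I-J,m} ‖A‖_{L_m(H_J)}, where the Hilbert–Schmidt norm is ‖A‖²_{HS,H_I} = Σ_{k₁,...,k_m} Π_j (1+|k_j|²)^{-I} |A[ς̃_{k₁},...,ς̃_{k_m}]|². -/

import Mathlib

/-
A bounded functional on `H_J` has basis coefficients `|a k| ≤ ‖A‖ ∏_j (1+|k_j|²)^{J/2}`, so each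
term of the Hilbert–Schmidt sum on `H_I` is at most `‖A‖² ∏_j (1+|k_j|²)^{-(I-J)}`. This majorant
is a product of one-variable series, so its sum is `(∑_{k ∈ ℤ^d} (1+|k|²)^{-(I-J)})^m`, finite
because `I - J > d/2`: bounding `(1+|k|²)^d` below by `∏_i (1+k_i²)` reduces this to the
one-dimensional series `∑_{n ∈ ℤ} (1+n²)^{-s}` with `s > 1/2`.
-/

open scoped BigOperators NNReal ENNReal

noncomputable section

/-- Squared euclidean norm `|k|²` of a lattice vector `k ∈ ℤ^d`. -/
def latNormSq (d : ℕ) (k : Fin d → ℤ) : ℝ := ∑ j, ((k j : ℝ)) ^ 2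

/-- Sobolev weight `(1+|k|²)^J`. -/
def sobWeight (d : ℕ) (J : ℝ) (k : Fin d → ℤ) : ℝ := (1 + latNormSq d k) ^ J

section TsumPiProd

variable {ι : Type*}

theorem ENNReal.tsum_fin_pi_prod (g : ι → ℝ≥0∞) (m : ℕ) :
    ∑' k : Fin m → ι, ∏ j, g (k j) = (∑' i, g i) ^ m := by
  induction m with
  | zero => simp
  | succ m ih =>
    rw [← (Fin.consEquiv fun _ => ι).tsum_eq, ENNReal.tsum_prod']
    simp_rw [Fin.consEquiv, Equiv.coe_fn_mk, Fin.prod_univ_succ, Fin.cons_zero, Fin.cons_succ,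
      ENNReal.tsum_mul_left, ih, ENNReal.tsum_mul_right, pow_succ']

theorem NNReal.hasSum_fin_pi_prod {f : ι → ℝ≥0} {s : ℝ≥0} (hf : HasSum f s) (m : ℕ) :
    HasSum (fun k : Fin m → ι => ∏ j, f (k j)) (s ^ m) := by
  rw [← ENNReal.hasSum_coe]
  push_cast
  rw [← hf.tsum_eq, ENNReal.coe_tsum hf.summable, ← ENNReal.tsum_fin_pi_prod]
  exact ENNReal.summable.hasSum

theorem hasSum_fin_pi_prod_of_nonneg {f : ι → ℝ} {s : ℝ} (hf0 : 0 ≤ f) (hf : HasSum f s)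
    (m : ℕ) : HasSum (fun k : Fin m → ι => ∏ j, f (k j)) (s ^ m) := by
  lift f to ι → ℝ≥0 using hf0
  lift s to ℝ≥0 using hf.nonneg fun i => (f i).2
  simpa using NNReal.hasSum_coe.mpr (NNReal.hasSum_fin_pi_prod (NNReal.hasSum_coe.mp hf) m)

end TsumPiProd

theorem summable_one_add_sq_rpow_neg {s : ℝ} (hs : 1 / 2 < s) :
    Summable fun n : ℤ => (1 + (n : ℝ) ^ 2) ^ (-s) := by
  refine .of_norm_bounded_eventually (Real.summable_abs_int_rpow (b := 2 * s) (by linarith)) ?_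
  filter_upwards [Set.Finite.compl_mem_cofinite (Set.finite_singleton (0 : ℤ))] with n hn
  have hn : 0 < |(n : ℝ)| := by simpa using hn
  rw [Real.norm_of_nonneg (by positivity), neg_mul_eq_mul_neg, Real.rpow_mul hn.le,
    Real.rpow_two]
  exact Real.rpow_le_rpow_of_nonpos (pow_pos hn 2) (by rw [sq_abs]; linarith) (by linarith)

section SobWeight

variable {d : ℕ}

theorem latNormSq_nonneg (k : Fin d → ℤ) : 0 ≤ latNormSq d k :=
  Finset.sum_nonneg fun _ _ => sq_nonneg _

theorem one_add_latNormSq_pos (k : Fin d → ℤ) : 0 < 1 + latNormSq d k := by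
  linarith [latNormSq_nonneg k]

theorem sobWeight_nonneg (J : ℝ) (k : Fin d → ℤ) : 0 ≤ sobWeight d J k :=
  Real.rpow_nonneg (one_add_latNormSq_pos k).le J

theorem sobWeight_add (s t : ℝ) (k : Fin d → ℤ) :
    sobWeight d (s + t) k = sobWeight d s k * sobWeight d t k :=
  Real.rpow_add (one_add_latNormSq_pos k) s t

theorem sq_one_add_latNormSq_rpow_half (J : ℝ) (k : Fin d → ℤ) :
    ((1 + latNormSq d k) ^ (J / 2)) ^ 2 = sobWeight d J k := by
  rw [← Real.rpow_mul_natCast (one_add_latNormSq_pos k).le, sobWeight]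
  norm_num

theorem prod_one_add_sq_le_pow (k : Fin d → ℤ) :
    ∏ i, (1 + (k i : ℝ) ^ 2) ≤ (1 + latNormSq d k) ^ d := by
  have hle : ∀ i, 1 + (k i : ℝ) ^ 2 ≤ 1 + latNormSq d k := fun i => by
    have := Finset.single_le_sum (fun j _ => sq_nonneg (k j : ℝ)) (Finset.mem_univ i)
    unfold latNormSq
    linarith
  simpa using Finset.prod_le_prod (s := Finset.univ) (fun i _ => by positivity) fun i _ => hle i

theorem sobWeight_neg_le_prod {s : ℝ} (hs : 0 ≤ s) (hd : d ≠ 0) (k : Fin d → ℤ) :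
    sobWeight d (-s) k ≤ ∏ i, (1 + (k i : ℝ) ^ 2) ^ (-(s / d)) := by
  have hprod_pos : 0 < ∏ i, (1 + (k i : ℝ) ^ 2) := Finset.prod_pos fun i _ => by positivity
  calc sobWeight d (-s) k = ((1 + latNormSq d k) ^ d) ^ (-(s / d)) := by
        rw [sobWeight, ← Real.rpow_natCast, ← Real.rpow_mul (one_add_latNormSq_pos k).le]
        field_simp
    _ ≤ (∏ i, (1 + (k i : ℝ) ^ 2)) ^ (-(s / d)) :=
        Real.rpow_le_rpow_of_nonpos hprod_pos (prod_one_add_sq_le_pow k)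
          (neg_nonpos.mpr (by positivity))
    _ = ∏ i, (1 + (k i : ℝ) ^ 2) ^ (-(s / d)) :=
        (Real.finsetProd_rpow _ _ (fun i _ => by positivity) _).symm

theorem summable_sobWeight_neg {s : ℝ} (hs : (d : ℝ) / 2 < s) :
    Summable (sobWeight d (-s)) := by
  rcases eq_or_ne d 0 with rfl | hd
  · exact .of_finite
  have hd' : (0 : ℝ) < d := by positivity
  have hsd : 1 / 2 < s / d := by rwa [lt_div_iff₀ hd', one_div_mul_eq_div]
  have hprod := hasSum_fin_pi_prod_of_nonneg (fun n => by positivity)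
    (summable_one_add_sq_rpow_neg hsd).hasSum d
  exact hprod.summable.of_nonneg_of_le (sobWeight_nonneg _)
    (sobWeight_neg_le_prod (by linarith [hd']) hd)

end SobWeight

theorem nonneg_of_forall_abs_le_mul_prod {d m : ℕ} {J Nrm : ℝ}
    {a : (Fin m → (Fin d → ℤ)) → ℝ}
    (ha : ∀ k, |a k| ≤ Nrm * ∏ j, (1 + latNormSq d (k j)) ^ (J / 2)) : 0 ≤ Nrm := by
  have hprod : 0 < ∏ j : Fin m, (1 + latNormSq d 0) ^ (J / 2) :=
    Finset.prod_pos fun j _ => Real.rpow_pos_of_pos (one_add_latNormSq_pos _) _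
  exact nonneg_of_mul_nonneg_left ((abs_nonneg _).trans (ha 0)) hprod

theorem hilbertSchmidt_term_le {d m : ℕ} {I J Nrm : ℝ} {a : (Fin m → (Fin d → ℤ)) → ℝ}
    (k : Fin m → (Fin d → ℤ))
    (hak : |a k| ≤ Nrm * ∏ j, (1 + latNormSq d (k j)) ^ (J / 2)) :
    (∏ j, sobWeight d (-I) (k j)) * (a k) ^ 2 ≤
      Nrm ^ 2 * ∏ j, sobWeight d (-(I - J)) (k j) := by
  have hsq : (a k) ^ 2 ≤ Nrm ^ 2 * ∏ j, sobWeight d J (k j) := by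
    rw [← sq_abs]
    refine (pow_le_pow_left₀ (abs_nonneg _) hak 2).trans_eq ?_
    simp_rw [mul_pow, ← Finset.prod_pow, sq_one_add_latNormSq_rpow_half]
  calc (∏ j, sobWeight d (-I) (k j)) * (a k) ^ 2
      ≤ (∏ j, sobWeight d (-I) (k j)) * (Nrm ^ 2 * ∏ j, sobWeight d J (k j)) :=
        mul_le_mul_of_nonneg_left hsq (Finset.prod_nonneg fun _ _ => sobWeight_nonneg _ _)
    _ = Nrm ^ 2 * ∏ j, sobWeight d (-(I - J)) (k j) := by
        simp_rw [neg_sub, sub_eq_neg_add, sobWeight_add, Finset.prod_mul_distrib]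
        ring

/-- Let `I > J + d/2`.  Every bounded symmetric `m`-linear functional `A` on
`H_J(T^d)` — represented by its array of values `a k = A[ς̃_{k₁},…,ς̃_{k_m}]` on the
basis, which by boundedness satisfies `|a k| ≤ ‖A‖ ∏_j (1+|k_j|²)^{J/2}` — restricts
to a Hilbert–Schmidt `m`-linear functional on `H_I(T^d)` with
`‖A‖_{HS,H_I} ≤ C_{I-J,m} ‖A‖_{L_m(H_J)}`, where
`‖A‖²_{HS,H_I} = Σ_k ∏_j (1+|k_j|²)^{-I} |a k|²` and the constant depends only on
`I - J`, `m` (and `d`). -/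
theorem multilinear_hilbert_schmidt_embedding (d m : ℕ) :
    ∃ C : ℝ → ℝ, (∀ δ : ℝ, 0 < C δ) ∧
      ∀ (I J : ℝ), I > J + (d : ℝ) / 2 →
        ∀ (a : (Fin m → (Fin d → ℤ)) → ℝ) (Nrm : ℝ),
          (∀ k, |a k| ≤ Nrm * ∏ j, (1 + latNormSq d (k j)) ^ (J / 2)) →
          Summable (fun k : Fin m → (Fin d → ℤ) =>
            (∏ j, sobWeight d (-I) (k j)) * (a k) ^ 2) ∧
          Real.sqrt (∑' k : Fin m → (Fin d → ℤ),
              (∏ j, sobWeight d (-I) (k j)) * (a k) ^ 2)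
            ≤ C (I - J) * Nrm := by
  refine ⟨fun δ => max 1 √((∑' k, sobWeight d (-δ) k) ^ m),
    fun δ => lt_max_of_lt_left one_pos, fun I J hIJ a Nrm ha => ?_⟩
  have hNrm : 0 ≤ Nrm := nonneg_of_forall_abs_le_mul_prod ha
  have hmajorant := ((hasSum_fin_pi_prod_of_nonneg (sobWeight_nonneg _)
    (summable_sobWeight_neg (d := d) (s := I - J) (by linarith)).hasSum m).mul_left (Nrm ^ 2))
  have hterm_nonneg : ∀ k : Fin m → (Fin d → ℤ), 0 ≤ (∏ j, sobWeight d (-I) (k j)) * (a k) ^ 2 :=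
    fun k => mul_nonneg (Finset.prod_nonneg fun _ _ => sobWeight_nonneg _ _) (sq_nonneg _)
  have hsummable := hmajorant.summable.of_nonneg_of_le hterm_nonneg
    fun k => hilbertSchmidt_term_le k (ha k)
  refine ⟨hsummable, ?_⟩
  calc √(∑' k, (∏ j, sobWeight d (-I) (k j)) * (a k) ^ 2)
      ≤ √(Nrm ^ 2 * (∑' k, sobWeight d (-(I - J)) k) ^ m) :=
        Real.sqrt_le_sqrt (hmajorant.tsum_eq ▸ hsummable.tsum_le_tsum
          (fun k => hilbertSchmidt_term_le k (ha k)) hmajorant.summable)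
    _ = √((∑' k, sobWeight d (-(I - J)) k) ^ m) * Nrm := by
        rw [Real.sqrt_mul' _ (pow_nonneg (tsum_nonneg (sobWeight_nonneg _)) _),
          Real.sqrt_sq hNrm, mul_comm]
    _ ≤ _ := mul_le_mul_of_nonneg_right (le_max_right _ _) hNrm
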